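/- Policy evaluation dominates the optimal value: let u_i be a globally stabilizing control policy and V_i ∈ C¹ with V_i(0)=0 satisfy L(V_i, u_i)(x) = 0 for all x. Assume V° ∈ P satisfies the HJB equation H(V°)=0 with optimal feedback u° = -(1/2)R⁻¹gᵀ∇V°. Then V_i(x) ≥ V°(x) for all x ∈ R^n, and moreover V_i(x₀) - V°(x₀) = ∫₀^∞ |u_i(x(t)) - u°(x(t))|_R² dt along the closed-loop trajectory with u = u_i starting at x₀. -/

import Mathlib

/-!
Subtracting the HJB equation for `V°` from the policy-evaluation equation `L(V_i, u_i) = 0` and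
completing the square in the control gives `(∇V_i - ∇V°) ⬝ (f + g u_i) = -|u_i - u°|²_R`: along
the closed loop, `V_i - V°` decreases at rate `|u_i - u°|²_R`. The trajectory tends to the
origin, where `V_i - V°` vanishes, so integrating over `(0, ∞)` gives the formula, and its
integrand is nonnegative because `R` is positive definite.
-/

open Matrix Filter MeasureTheory

/-- The gradient of `V : ℝⁿ → ℝ` at `y`, as a vector. -/
noncomputable def grad {n : ℕ} (V : (Fin n → ℝ) → ℝ) (y : Fin n → ℝ) : Fin n → ℝ :=
  fun i => fderiv ℝ V y (Pi.single i 1)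

/-- The origin is a globally asymptotically stable equilibrium of `ẋ = F(x)`. -/
def GloballyAsymptoticallyStable {n : ℕ} (F : (Fin n → ℝ) → (Fin n → ℝ)) : Prop :=
  (∀ ε > (0:ℝ), ∃ δ > (0:ℝ), ∀ x : ℝ → (Fin n → ℝ),
      (∀ t, HasDerivAt x (F (x t)) t) → ‖x 0‖ < δ → ∀ t ≥ (0:ℝ), ‖x t‖ < ε) ∧
  (∀ x : ℝ → (Fin n → ℝ), (∀ t, HasDerivAt x (F (x t)) t) →
      Tendsto x atTop (nhds 0))

theorem fderiv_apply_eq_grad_dotProduct {n : ℕ} (V : (Fin n → ℝ) → ℝ) (y v : Fin n → ℝ) :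
    fderiv ℝ V y v = grad V y ⬝ᵥ v := by
  rw [← ContinuousLinearMap.coe_coe, LinearMap.pi_apply_eq_sum_univ, dotProduct]
  refine Finset.sum_congr rfl fun i _ => ?_
  simp only [grad, smul_eq_mul, mul_comm, ContinuousLinearMap.coe_coe]
  congr 2
  funext j
  simp [Pi.single_apply, eq_comm]

section

variable {K ι κ : Type*} [Field K] [CharZero K] [Fintype ι] [DecidableEq ι] [Fintype κ]
  {R : Matrix ι ι K}

/-- `w` minimises `u ↦ u ⬝ᵥ R *ᵥ u + c ⬝ᵥ u`, with minimum `-(1/4) * (c ⬝ᵥ R⁻¹ *ᵥ c)`. -/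
theorem sub_dotProduct_mulVec_sub_neg_half_inv (hR : R.IsSymm) (hdet : IsUnit R.det)
    (b c : ι → K) :
    let w := (-(1/2) : K) • (R⁻¹ *ᵥ c)
    (b - w) ⬝ᵥ (R *ᵥ (b - w)) = b ⬝ᵥ (R *ᵥ b) + c ⬝ᵥ b + (1/4) * (c ⬝ᵥ (R⁻¹ *ᵥ c)) := by
  intro w
  have hRw : R *ᵥ w = (-(1/2) : K) • c := by
    rw [mulVec_smul, mulVec_mulVec, mul_nonsing_inv _ hdet, one_mulVec]
  have hbw : b ⬝ᵥ (R *ᵥ w) = -(1/2) * (c ⬝ᵥ b) := by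
    rw [hRw, dotProduct_smul, smul_eq_mul, dotProduct_comm]
  have hwb : w ⬝ᵥ (R *ᵥ b) = -(1/2) * (c ⬝ᵥ b) := by
    rw [← hbw, ← hR.eq, dotProduct_transpose_mulVec, hR.eq]
  have hww : w ⬝ᵥ (R *ᵥ w) = (1/4) * (c ⬝ᵥ (R⁻¹ *ᵥ c)) := by
    rw [hRw, dotProduct_smul, smul_dotProduct, smul_eq_mul, smul_eq_mul, dotProduct_comm]
    ring
  rw [sub_dotProduct, mulVec_sub, dotProduct_sub, dotProduct_sub, hbw, hwb, hww]
  ring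

theorem sub_dotProduct_eq_neg_of_policyEval_of_hjb (hR : R.IsSymm) (hdet : IsUnit R.det)
    {p a φ : κ → K} {G : Matrix κ ι K} {r : K} {b : ι → K}
    (heval : -(p ⬝ᵥ (φ + G *ᵥ b)) - r - b ⬝ᵥ (R *ᵥ b) = 0)
    (hhjb : a ⬝ᵥ φ + r - (1/4) * (a ⬝ᵥ (G *ᵥ (R⁻¹ *ᵥ (Gᵀ *ᵥ a)))) = 0) :
    let w := (-(1/2) : K) • (R⁻¹ *ᵥ (Gᵀ *ᵥ a))
    p ⬝ᵥ (φ + G *ᵥ b) - a ⬝ᵥ (φ + G *ᵥ b) = -((b - w) ⬝ᵥ (R *ᵥ (b - w))) := by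
  intro w
  have hG : ∀ v, a ⬝ᵥ (G *ᵥ v) = (Gᵀ *ᵥ a) ⬝ᵥ v := fun v => by
    rw [← dotProduct_transpose_mulVec, dotProduct_comm]
  rw [sub_dotProduct_mulVec_sub_neg_half_inv hR hdet]
  simp only [dotProduct_add, hG] at heval hhjb ⊢
  linear_combination -heval - hhjb

end

theorem apply_sub_apply_eq_integral_Ioi_of_trajectory {E : Type*} [NormedAddCommGroup E]
    [NormedSpace ℝ E] {W : E → ℝ} {W' : E → E →L[ℝ] ℝ} {F : E → E} {P : E → ℝ}
    {x : ℝ → E} {z : E}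
    (hW : ∀ y, HasFDerivAt W (W' y) y) (hdecay : ∀ y, W' y (F y) = -P y) (hP : ∀ y, 0 ≤ P y)
    (hx : ∀ t, HasDerivAt x (F (x t)) t) (hlim : Tendsto x atTop (nhds z)) :
    W (x 0) - W z = ∫ t in Set.Ioi 0, P (x t) := by
  have hderiv : ∀ t, HasDerivAt (W ∘ x) (-P (x t)) t := fun t => by
    simpa only [hdecay] using (hW (x t)).comp_hasDerivAt t (hx t)
  have hWlim : Tendsto (W ∘ x) atTop (nhds (W z)) :=
    ((hW z).continuousAt.tendsto).comp hlim
  have := integral_Ioi_of_hasDerivAt_of_nonpos' (a := 0) (fun t _ => hderiv t)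
    (fun t _ => neg_nonpos.2 (hP (x t))) hWlim
  rw [integral_neg, Function.comp_apply] at this
  linarith

theorem policy_evaluation_dominates_optimal_value_general {n m : ℕ}
    (f : (Fin n → ℝ) → (Fin n → ℝ))
    (g : (Fin n → ℝ) → Matrix (Fin n) (Fin m) ℝ)
    (R : Matrix (Fin m) (Fin m) ℝ) (hRpd : R.PosDef)
    (q : (Fin n → ℝ) → ℝ)
    -- L(V,u)(x) and the Hamiltonian H(V)(x)
    (L : ((Fin n → ℝ) → ℝ) → ((Fin n → ℝ) → (Fin m → ℝ)) → (Fin n → ℝ) → ℝ)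
    (hL : ∀ V u y, L V u y
      = -(grad V y ⬝ᵥ (f y + (g y) *ᵥ u y)) - q y - u y ⬝ᵥ (R *ᵥ u y))
    (H : ((Fin n → ℝ) → ℝ) → (Fin n → ℝ) → ℝ)
    (hH : ∀ W y, H W y = grad W y ⬝ᵥ f y + q y
      - (1/4) * (grad W y ⬝ᵥ ((g y) *ᵥ (R⁻¹ *ᵥ ((g y)ᵀ *ᵥ grad W y)))))
    -- the policy u_i, globally stabilizing, and its evaluation V_i
    (ui : (Fin n → ℝ) → (Fin m → ℝ))
    (Vi : (Fin n → ℝ) → ℝ) (hVi : ContDiff ℝ 1 Vi) (hVi0 : Vi 0 = 0)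
    (heval : ∀ y, L Vi ui y = 0)
    -- V° ∈ P solves the HJB equation, with optimal feedback u°
    (Vo : (Fin n → ℝ) → ℝ) (hVo : ContDiff ℝ 1 Vo)
    (hVo0 : Vo 0 = 0)
    (hHJB : ∀ y, H Vo y = 0)
    (uo : (Fin n → ℝ) → (Fin m → ℝ))
    (huo : ∀ y, uo y = (-(1/2) : ℝ) • (R⁻¹ *ᵥ ((g y)ᵀ *ᵥ grad Vo y)))
    -- closed-loop trajectories of u = u_i exist from every initial condition
    (hexist : ∀ x₀ : Fin n → ℝ, ∃ x : ℝ → (Fin n → ℝ),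
      (∀ t, HasDerivAt x (f (x t) + (g (x t)) *ᵥ ui (x t)) t) ∧
      x 0 = x₀ ∧ Tendsto x atTop (nhds 0)) :
    (∀ y : Fin n → ℝ, Vo y ≤ Vi y) ∧
    (∀ (x₀ : Fin n → ℝ) (x : ℝ → (Fin n → ℝ)),
      (∀ t, HasDerivAt x (f (x t) + (g (x t)) *ᵥ ui (x t)) t) → x 0 = x₀ →
      Tendsto x atTop (nhds 0) →
      Vi x₀ - Vo x₀ = ∫ t in Set.Ioi (0:ℝ),
        ((ui (x t) - uo (x t)) ⬝ᵥ (R *ᵥ (ui (x t) - uo (x t))))) := by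
  have hRsymm : R.IsSymm := (conjTranspose_eq_transpose_of_trivial R).symm.trans hRpd.isHermitian
  have hdet : IsUnit R.det := (isUnit_iff_isUnit_det R).1 hRpd.isUnit
  have hquad : ∀ v : Fin m → ℝ, 0 ≤ v ⬝ᵥ (R *ᵥ v) := by
    simpa using hRpd.posSemidef.dotProduct_mulVec_nonneg
  have hdecay : ∀ y, (fderiv ℝ Vi y - fderiv ℝ Vo y) (f y + g y *ᵥ ui y)
      = -((ui y - uo y) ⬝ᵥ (R *ᵥ (ui y - uo y))) := fun y => by
    rw [FunLike.coe_sub, Pi.sub_apply, fderiv_apply_eq_grad_dotProduct,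
      fderiv_apply_eq_grad_dotProduct, huo]
    exact sub_dotProduct_eq_neg_of_policyEval_of_hjb hRsymm hdet ((hL _ _ _).symm.trans (heval y))
      ((hH _ _).symm.trans (hHJB y))
  have hvalue : ∀ (x₀ : Fin n → ℝ) (x : ℝ → (Fin n → ℝ)),
      (∀ t, HasDerivAt x (f (x t) + (g (x t)) *ᵥ ui (x t)) t) → x 0 = x₀ →
      Tendsto x atTop (nhds 0) →
      Vi x₀ - Vo x₀ = ∫ t in Set.Ioi (0:ℝ),
        ((ui (x t) - uo (x t)) ⬝ᵥ (R *ᵥ (ui (x t) - uo (x t)))) := by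
    rintro x₀ x hx rfl hlim
    have hW : ∀ y, HasFDerivAt (fun y => Vi y - Vo y) (fderiv ℝ Vi y - fderiv ℝ Vo y) y :=
      fun y => ((hVi.differentiable one_ne_zero y).hasFDerivAt).sub
        ((hVo.differentiable one_ne_zero y).hasFDerivAt)
    simpa [hVi0, hVo0] using
      apply_sub_apply_eq_integral_Ioi_of_trajectory hW hdecay (fun y => hquad _) hx hlim
  refine ⟨fun y => ?_, hvalue⟩
  obtain ⟨x, hx, hx0, hlim⟩ := hexist y
  rw [← sub_nonneg, hvalue y x hx hx0 hlim]
  exact setIntegral_nonneg measurableSet_Ioi fun t _ => hquad _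

/-- Policy evaluation dominates the optimal value: `V_i ≥ V°` pointwise, and
`V_i(x₀) - V°(x₀) = ∫₀^∞ |u_i - u°|²_R dt` along the closed-loop trajectory
with `u = u_i` starting at `x₀`. -/
theorem policy_evaluation_dominates_optimal_value {n m : ℕ}
    (f : (Fin n → ℝ) → (Fin n → ℝ)) (hfc : Continuous f)
    (g : (Fin n → ℝ) → Matrix (Fin n) (Fin m) ℝ)
    (hgc : ∀ i j, Continuous fun y => g y i j)
    (R : Matrix (Fin m) (Fin m) ℝ) (hRsymm : R.IsSymm) (hRpd : R.PosDef)
    (q : (Fin n → ℝ) → ℝ) (hqc : Continuous q)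
    (hq : q 0 = 0 ∧ ∀ y ≠ 0, 0 < q y)
    -- L(V,u)(x) and the Hamiltonian H(V)(x)
    (L : ((Fin n → ℝ) → ℝ) → ((Fin n → ℝ) → (Fin m → ℝ)) → (Fin n → ℝ) → ℝ)
    (hL : ∀ V u y, L V u y
      = -(grad V y ⬝ᵥ (f y + (g y) *ᵥ u y)) - q y - u y ⬝ᵥ (R *ᵥ u y))
    (H : ((Fin n → ℝ) → ℝ) → (Fin n → ℝ) → ℝ)
    (hH : ∀ W y, H W y = grad W y ⬝ᵥ f y + q y
      - (1/4) * (grad W y ⬝ᵥ ((g y) *ᵥ (R⁻¹ *ᵥ ((g y)ᵀ *ᵥ grad W y)))))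
    -- the policy u_i, globally stabilizing, and its evaluation V_i
    (ui : (Fin n → ℝ) → (Fin m → ℝ))
    (hGAS : GloballyAsymptoticallyStable (fun y => f y + (g y) *ᵥ ui y))
    (Vi : (Fin n → ℝ) → ℝ) (hVi : ContDiff ℝ 1 Vi) (hVi0 : Vi 0 = 0)
    (heval : ∀ y, L Vi ui y = 0)
    -- V° ∈ P solves the HJB equation, with optimal feedback u°
    (Vo : (Fin n → ℝ) → ℝ) (hVo : ContDiff ℝ 1 Vo)
    (hVo0 : Vo 0 = 0) (hVopos : ∀ y ≠ 0, 0 < Vo y)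
    (hVoproper : Tendsto Vo (cocompact (Fin n → ℝ)) atTop)
    (hHJB : ∀ y, H Vo y = 0)
    (uo : (Fin n → ℝ) → (Fin m → ℝ))
    (huo : ∀ y, uo y = (-(1/2) : ℝ) • (R⁻¹ *ᵥ ((g y)ᵀ *ᵥ grad Vo y)))
    -- closed-loop trajectories of u = u_i exist from every initial condition
    (hexist : ∀ x₀ : Fin n → ℝ, ∃ x : ℝ → (Fin n → ℝ),
      (∀ t, HasDerivAt x (f (x t) + (g (x t)) *ᵥ ui (x t)) t) ∧
      x 0 = x₀ ∧ Tendsto x atTop (nhds 0)) :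
    (∀ y : Fin n → ℝ, Vo y ≤ Vi y) ∧
    (∀ (x₀ : Fin n → ℝ) (x : ℝ → (Fin n → ℝ)),
      (∀ t, HasDerivAt x (f (x t) + (g (x t)) *ᵥ ui (x t)) t) → x 0 = x₀ →
      Tendsto x atTop (nhds 0) →
      Vi x₀ - Vo x₀ = ∫ t in Set.Ioi (0:ℝ),
        ((ui (x t) - uo (x t)) ⬝ᵥ (R *ᵥ (ui (x t) - uo (x t))))) :=
  policy_evaluation_dominates_optimal_value_general f g R hRpd q L hL H hH ui Vi hVi hVi0 heval Vo
    hVo hVo0 hHJB uo huo hexist
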